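/- arXiv:1807.05893 — 2 statements merged into one kernel-verified Lean document; each statement's English description precedes it below -/
import Mathlib

section
/- Let m ≥ 2 and n ≥ 2m be integers. Then W(G^3_{n−2m+1, 2m−4}) ≤ W(G^3_{n−2m, 2m−3}), with equality if and only if n = 2m. -/
open SimpleGraph Finset

/-- The Wiener index of a graph: the sum of distances over all unordered pairs
of distinct vertices (computed as half the sum over ordered pairs). -/
noncomputable def wienerIndex {V : Type*} [Fintype V] (G : SimpleGraph V) : ℕ :=
  (∑ u : V, ∑ v : V, G.dist u v) / 2

/-- The matching number of a graph: maximum number of edges of a matching. -/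
noncomputable def matchingNumber {V : Type*} [Fintype V] (G : SimpleGraph V) : ℕ :=
  sSup {k : ℕ | ∃ M : G.Subgraph, M.IsMatching ∧ M.edgeSet.ncard = k}

/-- A graph is unicyclic if it is connected and has as many edges as vertices. -/
def IsUnicyclic {V : Type*} [Fintype V] (G : SimpleGraph V) : Prop :=
  G.Connected ∧ G.edgeSet.ncard = Fintype.card V

/-- `G3Graph a j` : a triangle on vertices `0,1,2`, a path with `j` edges attached to
vertex `2` (vertices `2,3,…,j+2`), and `a` pendant vertices attached to vertex `j+2`. -/
def G3Graph (a j : ℕ) : SimpleGraph (Fin (a + j + 3)) :=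
  SimpleGraph.fromRel (fun u v =>
    (u.val = 0 ∧ v.val = 1) ∨ (u.val = 0 ∧ v.val = 2) ∨ (u.val = 1 ∧ v.val = 2) ∨
    (2 ≤ u.val ∧ u.val ≤ j + 1 ∧ v.val = u.val + 1) ∨
    (u.val = j + 2 ∧ j + 3 ≤ v.val))

/-- `G3Graph4 a b c j` : a triangle on vertices `0,1,2`, a path with `j` edges attached to
vertex `2` ending in a star with `a` leaves, `b` pendant vertices attached to vertex `0`,
and `c` pendant vertices attached to vertex `1`. -/
def G3Graph4 (a b c j : ℕ) : SimpleGraph (Fin (a + b + c + j + 3)) :=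
  SimpleGraph.fromRel (fun u v =>
    (u.val = 0 ∧ v.val = 1) ∨ (u.val = 0 ∧ v.val = 2) ∨ (u.val = 1 ∧ v.val = 2) ∨
    (2 ≤ u.val ∧ u.val ≤ j + 1 ∧ v.val = u.val + 1) ∨
    (u.val = j + 2 ∧ j + 3 ≤ v.val ∧ v.val < j + 3 + a) ∨
    (u.val = 0 ∧ j + 3 + a ≤ v.val ∧ v.val < j + 3 + a + b) ∨
    (u.val = 1 ∧ j + 3 + a + b ≤ v.val))

/-- `G4Graph a c j` : a 4-cycle on vertices `0,1,2,3`, a path with `j` edges attached to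
vertex `3` (vertices `3,4,…,j+3`), `a` pendant vertices attached to the far endpoint `j+3`
of the path, and `c` pendant vertices attached to vertex `1` (opposite to `3`). -/
def G4Graph (a c j : ℕ) : SimpleGraph (Fin (a + c + j + 4)) :=
  SimpleGraph.fromRel (fun u v =>
    (u.val = 0 ∧ v.val = 1) ∨ (u.val = 1 ∧ v.val = 2) ∨ (u.val = 2 ∧ v.val = 3) ∨
    (u.val = 0 ∧ v.val = 3) ∨
    (3 ≤ u.val ∧ u.val ≤ j + 2 ∧ v.val = u.val + 1) ∨
    (u.val = j + 3 ∧ j + 4 ≤ v.val ∧ v.val < j + 4 + a) ∨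
    (u.val = 1 ∧ j + 4 + a ≤ v.val))

/-- relation generating `G3Graph`. -/
private def P3 (j x y : ℕ) : Prop :=
  (x = 0 ∧ y = 1) ∨ (x = 0 ∧ y = 2) ∨ (x = 1 ∧ y = 2) ∨
  (2 ≤ x ∧ x ≤ j + 1 ∧ y = x + 1) ∨ (x = j + 2 ∧ j + 3 ≤ y)

private lemma g3_adj_iff (a j : ℕ) (u v : Fin (a+j+3)) :
    (G3Graph a j).Adj u v ↔ u.val ≠ v.val ∧ (P3 j u.val v.val ∨ P3 j v.val u.val) := by
  unfold P3
  rw [G3Graph, SimpleGraph.fromRel_adj]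
  simp only [ne_eq, Fin.ext_iff]

private def qn (j x : ℕ) : ℕ := min (max x 1) (j+3)

private def Dnat (j x y : ℕ) : ℕ :=
  if x = y then 0
  else if x ≤ 1 ∧ y ≤ 1 then 1
  else if j + 3 ≤ x ∧ j + 3 ≤ y then 2
  else Nat.dist (qn j x) (qn j y)

private lemma qn_step {a j : ℕ} {u v : Fin (a+j+3)} (h : (G3Graph a j).Adj u v) :
    Nat.dist (qn j u.val) (qn j v.val) ≤ 1 := by
  rw [g3_adj_iff] at h
  obtain ⟨hne, h | h⟩ := h <;> unfold P3 at h <;> simp only [qn, Nat.dist] <;> omega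

private lemma walk_lb {a j : ℕ} {u v : Fin (a+j+3)} (w : (G3Graph a j).Walk u v) :
    Nat.dist (qn j u.val) (qn j v.val) ≤ w.length := by
  induction w with
  | nil => simp
  | @cons x y z h w ih =>
      have h1 := qn_step h
      have h2 := Nat.dist.triangle_inequality (qn j x.val) (qn j y.val) (qn j z.val)
      simp only [SimpleGraph.Walk.length_cons]
      omega

private lemma reach2 (a j : ℕ) (v : Fin (a+j+3)) :
    (G3Graph a j).Reachable v ⟨2, by omega⟩ := by
  obtain ⟨n, hnv⟩ : ∃ n, v.val = n := ⟨v.val, rfl⟩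
  induction n using Nat.strong_induction_on generalizing v with
  | _ n ih =>
  have hv3 := v.isLt
  rcases lt_or_ge v.val 3 with h3 | h3
  · rcases Nat.lt_or_ge v.val 2 with h2 | h2
    · exact (SimpleGraph.Adj.reachable
        (by rw [g3_adj_iff]; unfold P3; simp only [Fin.val_mk, and_true, true_and]; omega))
    · have : v = ⟨2, by omega⟩ := Fin.ext (by simp only [Fin.val_mk]; omega)
      rw [this]
  · -- v.val ≥ 3 : step to a smaller-index neighbour
    rcases le_or_gt v.val (j+2) with hp | hp
    · have hadj : (G3Graph a j).Adj v ⟨v.val - 1, by omega⟩ := by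
        rw [g3_adj_iff]; unfold P3; simp only [Fin.val_mk, and_true, true_and]; omega
      exact hadj.reachable.trans (ih (v.val - 1) (by omega) _ rfl)
    · have hadj : (G3Graph a j).Adj v ⟨j + 2, by omega⟩ := by
        rw [g3_adj_iff]; unfold P3; simp only [Fin.val_mk, and_true, true_and]; omega
      exact hadj.reachable.trans (ih (j+2) (by omega) _ rfl)

private lemma g3_connected (a j : ℕ) : (G3Graph a j).Connected := by
  rw [SimpleGraph.connected_iff]
  exact ⟨fun u v => (reach2 a j u).trans (reach2 a j v).symm, ⟨⟨2, by omega⟩⟩⟩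

private lemma adj_dist_le {a j : ℕ} {u v : Fin (a+j+3)} (h : (G3Graph a j).Adj u v) :
    (G3Graph a j).dist u v ≤ 1 :=
  le_of_eq (SimpleGraph.dist_eq_one_iff_adj.mpr h)

/-- distance along the path part -/
private lemma dist_spine (a j : ℕ) : ∀ d s, ∀ _h1 : 2 ≤ s, ∀ _h2 : s + d ≤ j + 2,
    (G3Graph a j).dist ⟨s, by omega⟩ ⟨s + d, by omega⟩ ≤ d := by
  intro d
  induction d with
  | zero => intro s _ _; simp
  | succ d ih =>
      intro s hs hsd
      have h1 := ih s hs (by omega)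
      have hadj : (G3Graph a j).Adj ⟨s + d, by omega⟩ ⟨s + (d+1), by omega⟩ := by
        rw [g3_adj_iff]; unfold P3; simp only [Fin.val_mk, and_true, true_and]; omega
      calc (G3Graph a j).dist ⟨s, by omega⟩ ⟨s + (d+1), by omega⟩
          ≤ (G3Graph a j).dist ⟨s, by omega⟩ ⟨s + d, by omega⟩ +
            (G3Graph a j).dist ⟨s + d, by omega⟩ ⟨s + (d+1), by omega⟩ :=
            (g3_connected a j).dist_triangle
        _ ≤ d + 1 := by have := adj_dist_le hadj; omega

/-- distance from any vertex `u` with `u.val ≤ 1` to the vertex `2`. -/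
private lemma dist_to2 {a j : ℕ} {u : Fin (a+j+3)} (hu : u.val ≤ 1) :
    (G3Graph a j).dist u ⟨2, by omega⟩ ≤ 1 := by
  apply adj_dist_le
  rw [g3_adj_iff]; unfold P3; simp only [Fin.val_mk, and_true, true_and]; omega

/-- distance from a pendant vertex to the path end `j+2`. -/
private lemma dist_pend {a j : ℕ} {u : Fin (a+j+3)} (hu : j + 3 ≤ u.val) :
    (G3Graph a j).dist u ⟨j + 2, by omega⟩ ≤ 1 := by
  apply adj_dist_le
  rw [g3_adj_iff]; unfold P3; simp only [Fin.val_mk, and_true, true_and]; omega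

private lemma dist_spine' (a j : ℕ) (s t : ℕ) (hs : 2 ≤ s) (hst : s ≤ t) (ht : t ≤ j + 2) :
    (G3Graph a j).dist ⟨s, by omega⟩ ⟨t, by omega⟩ ≤ t - s := by
  have := dist_spine a j (t - s) s hs (by omega)
  have he : (⟨s + (t - s), by omega⟩ : Fin (a+j+3)) = ⟨t, by omega⟩ := Fin.ext (by simp; omega)
  rwa [he] at this

private lemma dist_ub_le {a j : ℕ} (u v : Fin (a+j+3)) (hxy : u.val ≤ v.val) :
    (G3Graph a j).dist u v ≤ Dnat j u.val v.val := by
  have hconn := g3_connected a j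
  have hvlt := v.isLt
  have hult := u.isLt
  rcases eq_or_ne u.val v.val with he | hne
  · have : u = v := Fin.ext he
    subst this
    simp [Dnat, SimpleGraph.dist_self]
  · rcases le_or_gt u.val 1 with hu1 | hu1
    · rcases le_or_gt v.val 1 with hv1 | hv1
      · -- both in {0,1}: adjacent
        have : Dnat j u.val v.val = 1 := by unfold Dnat; simp only [if_neg hne]; rw [if_pos ⟨hu1, hv1⟩]
        rw [this]
        apply adj_dist_le
        rw [g3_adj_iff]; unfold P3; omega
      · rcases le_or_gt v.val (j+2) with hvp | hvp
        · -- u in triangle top, v on path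
          have hD : Dnat j u.val v.val = v.val - 1 := by
            unfold Dnat; rw [if_neg hne, if_neg (by omega), if_neg (by omega)]
            simp only [qn, Nat.dist]; omega
          rw [hD]
          calc (G3Graph a j).dist u v ≤ (G3Graph a j).dist u ⟨2, by omega⟩ +
                (G3Graph a j).dist ⟨2, by omega⟩ v := hconn.dist_triangle
            _ ≤ v.val - 1 := by
                have h1 := dist_to2 (a := a) (j := j) hu1
                have h2 := dist_spine' a j 2 v.val (le_refl _) (by omega) (by omega)
                have he : (⟨v.val, by omega⟩ : Fin (a+j+3)) = v := Fin.ext rfl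
                rw [he] at h2
                omega
        · -- u in triangle top, v pendant
          have hD : Dnat j u.val v.val = j + 2 := by
            unfold Dnat; rw [if_neg hne, if_neg (by omega), if_neg (by omega)]
            simp only [qn, Nat.dist]; omega
          rw [hD]
          calc (G3Graph a j).dist u v ≤ (G3Graph a j).dist u ⟨2, by omega⟩ +
                ((G3Graph a j).dist ⟨2, by omega⟩ ⟨j+2, by omega⟩ +
                 (G3Graph a j).dist ⟨j+2, by omega⟩ v) := by
                  have t1 := hconn.dist_triangle (u := u) (v := (⟨2, by omega⟩ : Fin (a+j+3))) (w := v)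
                  have t2 := hconn.dist_triangle (u := (⟨2, by omega⟩ : Fin (a+j+3)))
                    (v := (⟨j+2, by omega⟩ : Fin (a+j+3))) (w := v)
                  omega
            _ ≤ j + 2 := by
                have h1 := dist_to2 (a := a) (j := j) hu1
                have h2 := dist_spine' a j 2 (j+2) (le_refl _) (by omega) (by omega)
                have h3 : (G3Graph a j).dist v ⟨j+2, by omega⟩ ≤ 1 := dist_pend (by omega)
                rw [SimpleGraph.dist_comm (u := v)] at h3
                omega
    · rcases le_or_gt v.val (j+2) with hvp | hvp
      · -- both on path
        have hD : Dnat j u.val v.val = v.val - u.val := by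
          unfold Dnat; rw [if_neg hne, if_neg (by omega), if_neg (by omega)]
          simp only [qn, Nat.dist]; omega
        rw [hD]
        have h2 := dist_spine' a j u.val v.val (by omega) (by omega) (by omega)
        have heu : (⟨u.val, by omega⟩ : Fin (a+j+3)) = u := Fin.ext rfl
        have hev : (⟨v.val, by omega⟩ : Fin (a+j+3)) = v := Fin.ext rfl
        rwa [heu, hev] at h2
      · rcases le_or_gt u.val (j+2) with hup | hup
        · -- u on path, v pendant
          have hD : Dnat j u.val v.val = j + 3 - u.val := by
            unfold Dnat; rw [if_neg hne, if_neg (by omega), if_neg (by omega)]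
            simp only [qn, Nat.dist]; omega
          rw [hD]
          calc (G3Graph a j).dist u v ≤ (G3Graph a j).dist u ⟨j+2, by omega⟩ +
                (G3Graph a j).dist ⟨j+2, by omega⟩ v := hconn.dist_triangle
            _ ≤ j + 3 - u.val := by
                have h2 := dist_spine' a j u.val (j+2) (by omega) (by omega) (by omega)
                have heu : (⟨u.val, by omega⟩ : Fin (a+j+3)) = u := Fin.ext rfl
                rw [heu] at h2
                have h3 : (G3Graph a j).dist v ⟨j+2, by omega⟩ ≤ 1 := dist_pend (by omega)
                rw [SimpleGraph.dist_comm (u := v)] at h3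
                omega
        · -- both pendants
          have hD : Dnat j u.val v.val = 2 := by
            unfold Dnat; rw [if_neg hne, if_neg (by omega), if_pos ⟨by omega, by omega⟩]
          rw [hD]
          calc (G3Graph a j).dist u v ≤ (G3Graph a j).dist u ⟨j+2, by omega⟩ +
                (G3Graph a j).dist ⟨j+2, by omega⟩ v := hconn.dist_triangle
            _ ≤ 2 := by
                have h1 : (G3Graph a j).dist u ⟨j+2, by omega⟩ ≤ 1 := dist_pend (by omega)
                have h3 : (G3Graph a j).dist v ⟨j+2, by omega⟩ ≤ 1 := dist_pend (by omega)
                rw [SimpleGraph.dist_comm (u := v)] at h3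
                omega

private lemma Dnat_comm (j x y : ℕ) : Dnat j x y = Dnat j y x := by
  unfold Dnat
  rcases eq_or_ne x y with rfl | h
  · simp
  · rw [if_neg h, if_neg (Ne.symm h), Nat.dist_comm]
    split_ifs with h1 h2 h3 h4 h5 <;> first | rfl | omega

private lemma dist_lb {a j : ℕ} (u v : Fin (a+j+3)) :
    Dnat j u.val v.val ≤ (G3Graph a j).dist u v := by
  have hconn := g3_connected a j
  rcases eq_or_ne u v with rfl | hne
  · simp [Dnat]
  have hne' : u.val ≠ v.val := fun h => hne (Fin.ext h)
  have hpos : 0 < (G3Graph a j).dist u v := hconn.pos_dist_of_ne hne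
  obtain ⟨p, hp⟩ := (hconn u v).exists_walk_length_eq_dist
  have hwalk : Nat.dist (qn j u.val) (qn j v.val) ≤ (G3Graph a j).dist u v := hp ▸ walk_lb p
  unfold Dnat
  rw [if_neg hne']
  split_ifs with h1 h2
  · omega
  · -- both pendants: distance at least 2
    have hnadj : ¬ (G3Graph a j).Adj u v := by
      rw [g3_adj_iff]; unfold P3; omega
    have : (G3Graph a j).dist u v ≠ 1 := fun h =>
      hnadj (SimpleGraph.dist_eq_one_iff_adj.mp h)
    omega
  · exact hwalk

private lemma dist_eq {a j : ℕ} (u v : Fin (a+j+3)) :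
    (G3Graph a j).dist u v = Dnat j u.val v.val := by
  rcases le_or_gt u.val v.val with h | h
  · exact le_antisymm (dist_ub_le u v h) (dist_lb u v)
  · rw [SimpleGraph.dist_comm, Dnat_comm]
    exact le_antisymm (dist_ub_le v u (le_of_lt h)) (dist_lb v u)

/-- ordered double sum of `Dnat` -/
private def Sn (a j : ℕ) : ℕ :=
  ∑ x ∈ range (a+j+3), ∑ y ∈ range (a+j+3), Dnat j x y

private lemma wiener_eq (a j : ℕ) : wienerIndex (G3Graph a j) = Sn a j / 2 := by
  unfold wienerIndex Sn
  congr 1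
  have h1 : ∀ u : Fin (a+j+3), ∑ v : Fin (a+j+3), (G3Graph a j).dist u v
      = ∑ y ∈ range (a+j+3), Dnat j u.val y := by
    intro u
    rw [← Fin.sum_univ_eq_sum_range (fun y => Dnat j u.val y) (a+j+3)]
    exact Finset.sum_congr rfl fun v _ => dist_eq u v
  rw [Finset.sum_congr rfl fun u _ => h1 u]
  exact Fin.sum_univ_eq_sum_range (fun x => ∑ y ∈ range (a+j+3), Dnat j x y) (a+j+3)

private def Kn (j : ℕ) : ℕ := ∑ x ∈ range (j+3), (j + 3 - max x 1)

private lemma Kn_closed (j : ℕ) : 2 * Kn j = (j+1)*(j+2) + 4*(j+2) := by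
  induction j with
  | zero => decide
  | succ j ih =>
      have hstep : Kn (j+1) = Kn j + (j + 4) := by
        unfold Kn
        rw [show j+1+3 = (j+3)+1 by omega, Finset.sum_range_succ]
        have : ∀ x ∈ range (j+3), j+1+3 - max x 1 = (j + 3 - max x 1) + 1 := by
          intro x hx
          rw [Finset.mem_range] at hx
          omega
        rw [Finset.sum_congr rfl this, Finset.sum_add_distrib, Finset.sum_const,
          Finset.card_range, smul_eq_mul]
        omega
      rw [hstep]
      ring_nf
      ring_nf at ih
      omega

/-- peeling the last index off the double sum -/
private lemma double_peel (n : ℕ) (f : ℕ → ℕ → ℕ) (hsymm : ∀ x y, f x y = f y x)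
    (hdiag : f n n = 0) :
    ∑ x ∈ range (n+1), ∑ y ∈ range (n+1), f x y
      = (∑ x ∈ range n, ∑ y ∈ range n, f x y) + 2 * ∑ x ∈ range n, f x n := by
  rw [Finset.sum_range_succ]
  simp only [Finset.sum_range_succ]
  rw [Finset.sum_add_distrib, hdiag]
  have : ∑ y ∈ range n, f n y = ∑ x ∈ range n, f x n :=
    Finset.sum_congr rfl fun y _ => hsymm n y
  omega

private lemma Sn_zero_succ (j : ℕ) : Sn 0 (j+1) = Sn 0 j + 2 * Kn j := by
  unfold Sn
  rw [show 0+(j+1)+3 = (j+3)+1 by omega]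
  rw [double_peel (j+3) (Dnat (j+1)) (fun x y => Dnat_comm (j+1) x y) (by simp [Dnat])]
  congr 1
  · rw [show 0+j+3 = j+3 by omega]
    apply Finset.sum_congr rfl
    intro x hx
    rw [Finset.mem_range] at hx
    apply Finset.sum_congr rfl
    intro y hy
    rw [Finset.mem_range] at hy
    unfold Dnat qn
    rcases eq_or_ne x y with rfl | hne
    · simp
    · rw [if_neg hne, if_neg hne]
      split_ifs with h1 h2 h3 h4 <;> try rfl
      all_goals first
        | omega
        | (simp only [Nat.dist]; omega)
  · congr 1
    unfold Kn
    apply Finset.sum_congr rfl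
    intro x hx
    rw [Finset.mem_range] at hx
    unfold Dnat qn
    rw [if_neg (by omega), if_neg (by omega), if_neg (by omega)]
    simp only [Nat.dist]
    omega

private lemma Sn_zero_closed (j : ℕ) :
    6 * Sn 0 j = 12 + 12*(j+1)*(j+2) + 2*j*(j+1)*(j+2) := by
  induction j with
  | zero => decide
  | succ j ih =>
      have hK := Kn_closed j
      rw [Sn_zero_succ]
      have : 6 * (Sn 0 j + 2 * Kn j) = 6 * Sn 0 j + 6 * (2 * Kn j) := by ring
      rw [this, ih, hK]
      ring

private lemma Sn_succ (a j : ℕ) : Sn (a+1) j = Sn a j + 2 * (2*a + Kn j) := by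
  unfold Sn
  rw [show a+1+j+3 = (a+j+3)+1 by omega]
  rw [double_peel (a+j+3) (Dnat j) (fun x y => Dnat_comm j x y) (by simp [Dnat])]
  congr 1
  have hsplit : ∑ x ∈ range (a+j+3), Dnat j x (a+j+3)
      = ∑ x ∈ range (a+j+3), (if j+3 ≤ x then 2 else j + 3 - max x 1) := by
    apply Finset.sum_congr rfl
    intro x hx
    rw [Finset.mem_range] at hx
    unfold Dnat qn
    rw [if_neg (by omega), if_neg (by omega)]
    split_ifs with h1 h2 <;> first | omega | (simp only [Nat.dist]; omega)
  rw [hsplit]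
  have key : ∀ b : ℕ, ∑ x ∈ range (b+j+3), (if j+3 ≤ x then 2 else j + 3 - max x 1)
      = 2*b + Kn j := by
    intro b
    induction b with
    | zero =>
        rw [show 0+j+3 = j+3 by omega]
        rw [show (2*0 + Kn j) = Kn j by omega]
        unfold Kn
        apply Finset.sum_congr rfl
        intro x hx
        rw [Finset.mem_range] at hx
        rw [if_neg (by omega)]
    | succ b ihb =>
        rw [show b+1+j+3 = (b+j+3)+1 by omega, Finset.sum_range_succ, ihb,
          if_pos (by omega)]
        omega
  rw [key a]

private lemma Sn_closed (a j : ℕ) :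
    6 * Sn a j + 12 * a
      = 12 + 12*(j+1)*(j+2) + 2*j*(j+1)*(j+2) + 24*a*(j+2) + 6*a*(j+1)*(j+2) + 12*a*a := by
  induction a with
  | zero => simpa using Sn_zero_closed j
  | succ a ih =>
      have hK := Kn_closed j
      rw [Sn_succ]
      have h6 : 6 * (Sn a j + 2 * (2*a + Kn j)) + 12*(a+1)
          = (6 * Sn a j + 12 * a) + 24*a + 6*(2*Kn j) + 12 := by ring
      rw [h6, ih, hK]
      ring

private lemma Sn_key (k j : ℕ) : Sn k (j+1) = Sn (k+1) j + 2 * (k * (j+2)) := by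
  have h1 := Sn_closed k (j+1)
  have h2 := Sn_closed (k+1) j
  have h6 : 6 * Sn k (j+1) = 6 * (Sn (k+1) j + 2 * (k * (j+2))) := by
    zify at h1 h2 ⊢
    linear_combination h1 - h2
  exact Nat.eq_of_mul_eq_mul_left (by norm_num) h6

private lemma wiener_key (k j : ℕ) :
    wienerIndex (G3Graph k (j+1)) = wienerIndex (G3Graph (k+1) j) + k * (j+2) := by
  rw [wiener_eq, wiener_eq, Sn_key k j, mul_comm 2 (k * (j+2))]
  rw [Nat.add_mul_div_right _ _ (by norm_num : (0:ℕ) < 2)]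

theorem stmt14 (n m : ℕ) (hm : 2 ≤ m) (hn : 2 * m ≤ n) :
    wienerIndex (G3Graph (n - 2*m + 1) (2*m - 4)) ≤
      wienerIndex (G3Graph (n - 2*m) (2*m - 3)) ∧
    (wienerIndex (G3Graph (n - 2*m + 1) (2*m - 4)) =
        wienerIndex (G3Graph (n - 2*m) (2*m - 3)) ↔ n = 2*m) := by
  rw [show 2*m - 3 = (2*m - 4) + 1 by omega]
  rw [wiener_key (n - 2*m) (2*m - 4)]
  constructor
  · exact Nat.le_add_right _ _
  · constructor
    · intro h
      have h0 : (n - 2*m) * (2*m - 4 + 2) = 0 := by omega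
      rcases Nat.mul_eq_zero.mp h0 with h1 | h1 <;> omega
    · intro h
      have : n - 2*m = 0 := by omega
      rw [this]
      simp
end

section
/- Let G be a tree with n vertices and matching number m, where 2 ≤ m ≤ ⌊n/2⌋. Then W(G) ≥ n² + (m−3)n − 3m + 4. -/
/-!
Deleting an edge `ab` of a tree splits the vertices into the side `A` of `a` and the side `B`
of `b`, and each of the `2|A||B|` ordered pairs across the cut has `ab` on its geodesic; so twice
the Wiener index is at least `∑ 2|A||B|` over the edges. A side contains its endpoint and that
endpoint's other neighbours, so `|A| ≥ deg a`: a pendant edge contributes at least `2(n - 1)`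
and an edge between two non-leaves at least `4(n - 2)`. Since `n ≥ 3`, every edge of a maximum
matching has a non-leaf endpoint, so there are at least `m` non-leaves; pendant edges inject
into leaves, so at least `m - 1` of the `n - 1` edges join two non-leaves. Altogether
`W ≥ (n - 1)² + (m - 1)(n - 3)`.
-/

open SimpleGraph Finset

open scoped Classical

namespace SimpleGraph

variable {V : Type*} [Fintype V] {G : SimpleGraph V}

noncomputable def internalEdges (G : SimpleGraph V) : Finset (Sym2 V) :=
  {e ∈ G.edgeFinset | ∀ v ∈ e, 2 ≤ G.degree v}

lemma exists_isMatching_ncard_eq_matchingNumber (G : SimpleGraph V) :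
    ∃ M : G.Subgraph, M.IsMatching ∧ M.edgeSet.ncard = matchingNumber G := by
  refine Nat.sSup_mem (s := {k | ∃ M : G.Subgraph, M.IsMatching ∧ M.edgeSet.ncard = k})
    ⟨0, ⊥, fun _ h ↦ h.elim, by simp⟩ ⟨G.edgeSet.ncard, ?_⟩
  rintro k ⟨M, -, rfl⟩
  exact Set.ncard_le_ncard M.edgeSet_subset

lemma IsTree.ncard_edgeSet_add_one_le (hG : G.IsTree) (M : G.Subgraph) :
    M.edgeSet.ncard + 1 ≤ Fintype.card V := by
  rw [← hG.card_edgeFinset, ← Set.ncard_coe_finset, coe_edgeFinset]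
  exact Nat.add_le_add_right (Set.ncard_le_ncard M.edgeSet_subset) 1

lemma two_le_degree_of_adj {a b c : V} (hab : G.Adj a b) (hac : G.Adj a c)
    (hbc : b ≠ c) : 2 ≤ G.degree a := by
  rw [← card_neighborFinset_eq_degree]
  exact one_lt_card.2 ⟨b, by simpa, c, by simpa, hbc⟩

lemma Connected.two_le_degree_or (hG : G.Connected) (hn : 3 ≤ Fintype.card V)
    {a b : V} (hab : G.Adj a b) : 2 ≤ G.degree a ∨ 2 ≤ G.degree b := by
  obtain ⟨c, -, hc⟩ := exists_mem_notMem_of_card_lt_card (s := {a, b}) (t := univ)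
    (by rw [card_univ]; exact (card_le_two).trans_lt hn)
  obtain ⟨d, -, hd, hd'⟩ :=
    (hG a c).some.exists_boundary_dart {a, b} (by simp) (by simpa using hc)
  simp only [Set.mem_insert_iff, Set.mem_singleton_iff, not_or] at hd hd'
  rcases hd with rfl | rfl
  · exact .inl (two_le_degree_of_adj hab d.adj (Ne.symm hd'.2))
  · exact .inr (two_le_degree_of_adj hab.symm d.adj (Ne.symm hd'.1))

lemma Subgraph.IsMatching.ncard_edgeSet_le (hG : G.Connected) (hn : 3 ≤ Fintype.card V)
    {M : G.Subgraph} (hM : M.IsMatching) : M.edgeSet.ncard ≤ #{v | 2 ≤ G.degree v} := by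
  rw [Set.ncard_eq_toFinset_card']
  refine card_le_card_of_forall_subsingleton (fun e v ↦ v ∈ e) ?_ ?_
  · intro e he
    induction e using Sym2.ind with
    | _ a b =>
      have hab := M.adj_sub (Subgraph.mem_edgeSet.1 (Set.mem_toFinset.1 he))
      rcases hG.two_le_degree_or hn hab with h | h
      · exact ⟨a, by simpa using h, Sym2.mem_mk_left a b⟩
      · exact ⟨b, by simpa using h, Sym2.mem_mk_right a b⟩
  · rintro v - e₁ ⟨he₁, hv₁⟩ e₂ ⟨he₂, hv₂⟩
    obtain ⟨w₁, rfl⟩ := Sym2.mem_iff_exists.1 hv₁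
    obtain ⟨w₂, rfl⟩ := Sym2.mem_iff_exists.1 hv₂
    simp only [Set.mem_toFinset, Subgraph.mem_edgeSet] at he₁ he₂
    rw [hM.eq_of_adj_left he₁ he₂]

lemma card_sdiff_internalEdges_le :
    #(G.edgeFinset \ G.internalEdges) ≤ #{v | ¬ 2 ≤ G.degree v} := by
  refine card_le_card_of_forall_subsingleton (fun e v ↦ v ∈ e) ?_ ?_
  · intro e he
    simp only [internalEdges, mem_sdiff, mem_filter, not_and, not_forall] at he
    obtain ⟨v, hv, hdeg⟩ := he.2 he.1
    exact ⟨v, by simpa using hdeg, hv⟩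
  · rintro v hv e₁ ⟨he₁, hv₁⟩ e₂ ⟨he₂, hv₂⟩
    obtain ⟨w₁, rfl⟩ := Sym2.mem_iff_exists.1 hv₁
    obtain ⟨w₂, rfl⟩ := Sym2.mem_iff_exists.1 hv₂
    simp only [mem_sdiff, mem_edgeFinset, mem_edgeSet] at he₁ he₂
    have h : #(G.neighborFinset v) ≤ 1 := by simpa using hv
    rw [card_le_one.1 h w₁ (by simpa using he₁.1) w₂ (by simpa using he₂.1)]

lemma IsTree.ncard_le_card_internalEdges_add_one (hG : G.IsTree) (hn : 3 ≤ Fintype.card V)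
    {M : G.Subgraph} (hM : M.IsMatching) : M.edgeSet.ncard ≤ #G.internalEdges + 1 := by
  have hmatching := hM.ncard_edgeSet_le hG.connected hn
  have hpendant := card_sdiff_internalEdges_le (G := G)
  have hedges : #(G.edgeFinset \ G.internalEdges) + #G.internalEdges = #G.edgeFinset :=
    card_sdiff_add_card_eq_card (filter_subset _ _)
  have hverts := card_filter_add_card_filter_not (s := univ) (fun v ↦ 2 ≤ G.degree v)
  have htree := hG.card_edgeFinset
  rw [card_univ] at hverts
  omega

noncomputable def edgeSide (G : SimpleGraph V) (a b : V) : Finset V :=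
  {v | (G.deleteEdges {s(a, b)}).Reachable v a}

noncomputable def separatedPairs (G : SimpleGraph V) (e : Sym2 V) : Finset (V × V) :=
  {p | ¬ (G.deleteEdges {e}).Reachable p.1 p.2}

lemma mem_edgeSide {a b v : V} :
    v ∈ G.edgeSide a b ↔ (G.deleteEdges {s(a, b)}).Reachable v a := by
  simp [edgeSide]

lemma mem_edgeSide_swap {a b v : V} :
    v ∈ G.edgeSide b a ↔ (G.deleteEdges {s(a, b)}).Reachable v b := by
  rw [mem_edgeSide, Sym2.eq_swap]

lemma degree_le_card_edgeSide (a b : V) : G.degree a ≤ #(G.edgeSide a b) := by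
  have hsub : insert a ((G.neighborFinset a).erase b) ⊆ G.edgeSide a b := by
    intro c hc
    rw [mem_edgeSide]
    rcases mem_insert.1 hc with rfl | hc
    · rfl
    · obtain ⟨hcb, hac⟩ := mem_erase.1 hc
      refine (Adj.reachable ?_).symm
      rw [deleteEdges_adj, Set.mem_singleton_iff, Sym2.congr_right]
      exact ⟨(mem_neighborFinset _ _ _).1 hac, hcb⟩
  calc G.degree a ≤ #((G.neighborFinset a).erase b) + 1 := by
        rw [← card_neighborFinset_eq_degree]
        have := pred_card_le_card_erase (s := G.neighborFinset a) (a := b)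
        omega
    _ = #(insert a ((G.neighborFinset a).erase b)) := by
        rw [card_insert_of_notMem (by simp)]
    _ ≤ _ := card_le_card hsub

lemma IsAcyclic.disjoint_edgeSide (hG : G.IsAcyclic) {a b : V} (hab : G.Adj a b) :
    Disjoint (G.edgeSide a b) (G.edgeSide b a) := by
  rw [Finset.disjoint_left]
  intro v hva hvb
  exact isAcyclic_iff_forall_adj_isBridge.1 hG hab
    ((mem_edgeSide.1 hva).symm.trans (mem_edgeSide_swap.1 hvb))

lemma Connected.edgeSide_union (hG : G.Connected) (a b : V) :
    G.edgeSide a b ∪ G.edgeSide b a = univ := by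
  refine eq_univ_of_forall fun v ↦ by_contra fun hv ↦ ?_
  obtain ⟨d, -, hd, hd'⟩ := (hG a v).some.exists_boundary_dart
    ↑(G.edgeSide a b ∪ G.edgeSide b a) (by simp [mem_edgeSide]) (by simpa using hv)
  simp only [mem_coe, mem_union, mem_edgeSide, Sym2.eq_swap (a := b)] at hd hd'
  by_cases he : d.edge = s(a, b)
  · rcases (Sym2.eq_iff (x := d.fst) (y := d.snd)).1 he with ⟨-, h⟩ | ⟨-, h⟩ <;>
      simp [h] at hd'
  · have hadj : (G.deleteEdges {s(a, b)}).Adj d.snd d.fst := by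
      rw [deleteEdges_adj, Set.mem_singleton_iff, Sym2.eq_swap]
      exact ⟨d.adj.symm, he⟩
    exact hd' (hd.imp hadj.reachable.trans hadj.reachable.trans)

lemma IsTree.card_edgeSide_add_card_edgeSide (hG : G.IsTree) {a b : V} (hab : G.Adj a b) :
    #(G.edgeSide a b) + #(G.edgeSide b a) = Fintype.card V := by
  rw [← card_union_of_disjoint (hG.isAcyclic.disjoint_edgeSide hab),
    hG.connected.edgeSide_union, card_univ]

lemma IsAcyclic.two_mul_card_edgeSide_le (hG : G.IsAcyclic) {a b : V} (hab : G.Adj a b) :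
    2 * (#(G.edgeSide a b) * #(G.edgeSide b a)) ≤ #(G.separatedPairs s(a, b)) := by
  have hsep : ∀ u ∈ G.edgeSide a b, ∀ v ∈ G.edgeSide b a,
      ¬ (G.deleteEdges {s(a, b)}).Reachable u v := fun u hu v hv huv ↦
    isAcyclic_iff_forall_adj_isBridge.1 hG hab
      ((mem_edgeSide.1 hu).symm.trans (huv.trans (mem_edgeSide_swap.1 hv)))
  have hsub : G.edgeSide a b ×ˢ G.edgeSide b a ∪ G.edgeSide b a ×ˢ G.edgeSide a b ⊆
      G.separatedPairs s(a, b) := by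
    rintro ⟨u, v⟩ huv
    simp only [mem_union, mem_product] at huv
    simp only [separatedPairs, mem_filter, mem_univ, true_and]
    rcases huv with ⟨hu, hv⟩ | ⟨hu, hv⟩
    · exact hsep u hu v hv
    · exact fun h ↦ hsep v hv u hu h.symm
  have hdisj := hG.disjoint_edgeSide hab
  calc 2 * (#(G.edgeSide a b) * #(G.edgeSide b a))
      = #(G.edgeSide a b ×ˢ G.edgeSide b a ∪ G.edgeSide b a ×ˢ G.edgeSide a b) := by
        rw [card_union_of_disjoint (disjoint_product.2 (.inl hdisj)), card_product,
          card_product]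
        ring
    _ ≤ _ := card_le_card hsub

lemma IsTree.mul_sub_le_card_separatedPairs (hG : G.IsTree) {a b : V} (hab : G.Adj a b) {k : ℕ}
    (ha : k ≤ G.degree a) (hb : k ≤ G.degree b) :
    2 * (k * (Fintype.card V - k)) ≤ #(G.separatedPairs s(a, b)) := by
  refine le_trans ?_ (hG.isAcyclic.two_mul_card_edgeSide_le hab)
  rw [← hG.card_edgeSide_add_card_edgeSide hab]
  obtain ⟨x, hx⟩ := Nat.exists_eq_add_of_le ((ha.trans (G.degree_le_card_edgeSide a b)))
  obtain ⟨y, hy⟩ := Nat.exists_eq_add_of_le ((hb.trans (G.degree_le_card_edgeSide b a)))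
  rw [hx, hy, show k + x + (k + y) - k = k + x + y by omega]
  nlinarith [Nat.zero_le (x * y)]

lemma Reachable.card_filter_not_reachable_deleteEdges_le_dist {u v : V} (h : G.Reachable u v) :
    #{e ∈ G.edgeFinset | ¬ (G.deleteEdges {e}).Reachable u v} ≤ G.dist u v := by
  obtain ⟨p, hp⟩ := h.exists_walk_length_eq_dist
  calc #{e ∈ G.edgeFinset | ¬ (G.deleteEdges {e}).Reachable u v}
      ≤ #p.edges.toFinset := card_le_card fun e he ↦
        List.mem_toFinset.2 (p.mem_edges_of_not_reachable_deleteEdges (mem_filter.1 he).2)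
    _ ≤ p.edges.length := p.edges.toFinset_card_le
    _ = G.dist u v := by rw [p.length_edges, hp]

lemma Connected.sum_card_separatedPairs_le_sum_dist (hG : G.Connected) :
    ∑ e ∈ G.edgeFinset, #(G.separatedPairs e) ≤ ∑ u, ∑ v, G.dist u v := by
  calc ∑ e ∈ G.edgeFinset, #(G.separatedPairs e)
      = ∑ u, ∑ v, #{e ∈ G.edgeFinset | ¬ (G.deleteEdges {e}).Reachable u v} := by
        simp only [separatedPairs, card_filter, Fintype.sum_prod_type]
        rw [sum_comm]
        exact sum_congr rfl fun u _ ↦ sum_comm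
    _ ≤ ∑ u, ∑ v, G.dist u v := sum_le_sum fun u _ ↦ sum_le_sum fun v _ ↦
        (hG u v).card_filter_not_reachable_deleteEdges_le_dist

lemma IsTree.add_two_mul_le_card_separatedPairs (hG : G.IsTree) (hn : 3 ≤ Fintype.card V)
    {e : Sym2 V} (he : e ∈ G.edgeFinset) :
    2 * (Fintype.card V - 1)
        + (if ∀ v ∈ e, 2 ≤ G.degree v then 2 * (Fintype.card V - 3) else 0)
      ≤ #(G.separatedPairs e) := by
  induction e using Sym2.ind with
  | _ a b =>
    have hab : G.Adj a b := mem_edgeFinset.1 he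
    split_ifs with hint
    · have := hG.mul_sub_le_card_separatedPairs hab (hint a (Sym2.mem_mk_left a b))
        (hint b (Sym2.mem_mk_right a b))
      omega
    · have := hG.mul_sub_le_card_separatedPairs hab (k := 1)
        ((G.degree_pos_iff_exists_adj a).2 ⟨b, hab⟩)
        ((G.degree_pos_iff_exists_adj b).2 ⟨a, hab.symm⟩)
      omega

lemma IsTree.le_wienerIndex (hG : G.IsTree) (hn : 3 ≤ Fintype.card V) :
    (Fintype.card V - 1) ^ 2 + (Fintype.card V - 3) * #G.internalEdges ≤ wienerIndex G := by
  rw [wienerIndex, Nat.le_div_iff_mul_le two_pos, internalEdges]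
  have hedges := hG.card_edgeFinset
  calc ((Fintype.card V - 1) ^ 2
        + (Fintype.card V - 3) * #{e ∈ G.edgeFinset | ∀ v ∈ e, 2 ≤ G.degree v}) * 2
      = ∑ e ∈ G.edgeFinset, (2 * (Fintype.card V - 1)
          + if ∀ v ∈ e, 2 ≤ G.degree v then 2 * (Fintype.card V - 3) else 0) := by
        rw [sum_add_distrib, sum_const, ← sum_filter, sum_const, smul_eq_mul, smul_eq_mul,
          show #G.edgeFinset = Fintype.card V - 1 by omega]
        ring
    _ ≤ ∑ e ∈ G.edgeFinset, #(G.separatedPairs e) :=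
        sum_le_sum fun e he ↦ hG.add_two_mul_le_card_separatedPairs hn he
    _ ≤ ∑ u, ∑ v, G.dist u v := hG.connected.sum_card_separatedPairs_le_sum_dist

end SimpleGraph

theorem stmt19_general {V : Type*} [Fintype V] (G : SimpleGraph V) (n m : ℕ)
    (hcard : Fintype.card V = n) (htree : G.IsTree) (hm : matchingNumber G = m)
    (h1 : 2 ≤ m) :
    (n:ℚ)^2 + ((m:ℚ) - 3) * (n:ℚ) - 3 * (m:ℚ) + 4 ≤ (wienerIndex G : ℚ) := by
  obtain ⟨M, hM, hMm⟩ := G.exists_isMatching_ncard_eq_matchingNumber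
  rw [hm] at hMm
  have hn : 3 ≤ Fintype.card V := by have := htree.ncard_edgeSet_add_one_le M; omega
  have hinternal := hMm ▸ htree.ncard_le_card_internalEdges_add_one hn hM
  have hW := hcard ▸ htree.le_wienerIndex hn
  rw [hcard] at hn
  have key : (n - 1) ^ 2 + (n - 3) * (m - 1) ≤ wienerIndex G :=
    le_trans (by gcongr; omega) hW
  calc (n:ℚ)^2 + ((m:ℚ) - 3) * (n:ℚ) - 3 * (m:ℚ) + 4
      = ((n - 1) ^ 2 + (n - 3) * (m - 1) : ℕ) := by
        push_cast [Nat.cast_sub (show 1 ≤ n by omega), Nat.cast_sub (show 1 ≤ m by omega),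
          Nat.cast_sub hn]
        ring
    _ ≤ wienerIndex G := by exact_mod_cast key

theorem stmt19 {V : Type*} [Fintype V] (G : SimpleGraph V) (n m : ℕ)
    (hcard : Fintype.card V = n) (htree : G.IsTree) (hm : matchingNumber G = m)
    (h1 : 2 ≤ m) (h2 : m ≤ n / 2) :
    (n:ℚ)^2 + ((m:ℚ) - 3) * (n:ℚ) - 3 * (m:ℚ) + 4 ≤ (wienerIndex G : ℚ) :=
  stmt19_general G n m hcard htree hm h1
end
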